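/- Let n be a positive integer and let G be a (2K₂, P₄ ∨ Kₙ)-free graph containing an induced 5-cycle Q = {v₁, v₂, v₃, v₄, v₅} with vᵢ adjacent to v_{i+1} (indices modulo 5). For each i, let Bᵢ = {u ∈ V(G)\Q : N(u) ∩ Q = {vᵢ, v_{i−2}, v_{i+2}}} and Dᵢ = {u ∈ V(G)\Q : N(u) ∩ Q = Q\{vᵢ}}. If the subgraph induced by Bᵢ has clique number at least n + 1, then B_{i+2} ∪ B_{i−2} ∪ D_{i+2} ∪ D_{i−2} = ∅. -/

import Mathlib

open SimpleGraph

/-- The join `G ∨ H` of two graphs: the disjoint union of `G` and `H` together with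
all edges between the two parts. -/
def SimpleGraph.join {α β : Type*} (G : SimpleGraph α) (H : SimpleGraph β) :
    SimpleGraph (α ⊕ β) where
  Adj u v := match u, v with
    | Sum.inl u, Sum.inl v => G.Adj u v
    | Sum.inr u, Sum.inr v => H.Adj u v
    | Sum.inl _, Sum.inr _ => True
    | Sum.inr _, Sum.inl _ => True
  symm := ⟨fun u v => match u, v with
    | Sum.inl u, Sum.inl v => fun h => G.adj_symm h
    | Sum.inr u, Sum.inr v => fun h => H.adj_symm h
    | Sum.inl _, Sum.inr _ => fun _ => trivial
    | Sum.inr _, Sum.inl _ => fun _ => trivial⟩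
  loopless := ⟨fun u => by cases u <;> simp⟩

/-- `G` is `H`-free: `G` has no induced subgraph isomorphic to `H`
(no graph embedding of `H` into `G`). -/
def SimpleGraph.HFree {α β : Type*} (G : SimpleGraph α) (H : SimpleGraph β) : Prop :=
  ¬ Nonempty (H ↪g G)

/-- `2K₂`: the disjoint union of two copies of `K₂`. -/
def twoK2 : SimpleGraph (Fin 2 ⊕ Fin 2) :=
  (⊤ : SimpleGraph (Fin 2)) ⊕g (⊤ : SimpleGraph (Fin 2))

/-- `P₄ ∨ Kₙ`: the join of the path on `4` vertices with the complete graph on `n` vertices. -/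
def P4JoinK (n : ℕ) : SimpleGraph (Fin 4 ⊕ Fin n) :=
  SimpleGraph.join (pathGraph 4) (⊤ : SimpleGraph (Fin n))

/-- `Aᵢ`: vertices outside the induced five-cycle `v` whose neighbourhood on the cycle
is exactly `{v (i-1), v (i+1)}`. -/
def Aset {V : Type*} (G : SimpleGraph V) (v : Fin 5 → V) (i : Fin 5) : Set V :=
  {u | u ∉ Set.range v ∧ G.neighborSet u ∩ Set.range v = {v (i - 1), v (i + 1)}}

/-- `Bᵢ`: vertices outside the induced five-cycle `v` whose neighbourhood on the cycle
is exactly `{v i, v (i-2), v (i+2)}`. -/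
def Bset {V : Type*} (G : SimpleGraph V) (v : Fin 5 → V) (i : Fin 5) : Set V :=
  {u | u ∉ Set.range v ∧ G.neighborSet u ∩ Set.range v = {v i, v (i - 2), v (i + 2)}}

/-- `Dᵢ`: vertices outside the induced five-cycle `v` whose neighbourhood on the cycle
is exactly `Q \ {v i}`. -/
def Dset {V : Type*} (G : SimpleGraph V) (v : Fin 5 → V) (i : Fin 5) : Set V :=
  {u | u ∉ Set.range v ∧ G.neighborSet u ∩ Set.range v = Set.range v \ {v i}}

/-- `F`: vertices outside the induced five-cycle `v` adjacent to all of the cycle. -/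
def Fset {V : Type*} (G : SimpleGraph V) (v : Fin 5 → V) : Set V :=
  {u | u ∉ Set.range v ∧ G.neighborSet u ∩ Set.range v = Set.range v}

/-- `Z`: vertices outside the induced five-cycle `v` with no neighbour on the cycle. -/
def Zset {V : Type*} (G : SimpleGraph V) (v : Fin 5 → V) : Set V :=
  {u | u ∉ Set.range v ∧ G.neighborSet u ∩ Set.range v = ∅}


section Aux

lemma no2K2 {V : Type} {G : SimpleGraph V} (h1 : G.HFree twoK2)
    {a b c d : V} (hab : G.Adj a b) (hcd : G.Adj c d)
    (hac : ¬ G.Adj a c) (had : ¬ G.Adj a d) (hbc : ¬ G.Adj b c) (hbd : ¬ G.Adj b d)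
    (nac : a ≠ c) (nad : a ≠ d) (nbc : b ≠ c) (nbd : b ≠ d) : False := by
  have nab : a ≠ b := hab.ne
  have ncd : c ≠ d := hcd.ne
  have hca : ¬ G.Adj c a := fun h => hac h.symm
  have hda : ¬ G.Adj d a := fun h => had h.symm
  have hcb : ¬ G.Adj c b := fun h => hbc h.symm
  have hdb : ¬ G.Adj d b := fun h => hbd h.symm
  apply h1
  refine ⟨⟨⟨Sum.elim ![a, b] ![c, d], ?_⟩, ?_⟩⟩
  · have hinj : Function.Injective (Sum.elim ![a, b] ![c, d]) := by
      rintro (x | x) (y | y) h <;> fin_cases x <;> fin_cases y <;> simp_all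
    exact hinj
  · rintro (x | x) (y | y) <;> fin_cases x <;> fin_cases y <;>
      simp [twoK2, hab, hcd, hab.symm, hcd.symm, hac, had, hbc, hbd, hca, hda, hcb, hdb]

lemma noP4K {n : ℕ} {V : Type} {G : SimpleGraph V} (h2 : G.HFree (P4JoinK n))
    {a b c d : V} {t : Finset V} (ht : G.IsClique ↑t) (htc : t.card = n)
    (hab : G.Adj a b) (hbc : G.Adj b c) (hcd : G.Adj c d)
    (hac : ¬ G.Adj a c) (had : ¬ G.Adj a d) (hbd : ¬ G.Adj b d)
    (hta : ∀ x ∈ t, G.Adj a x) (htb : ∀ x ∈ t, G.Adj b x)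
    (htcc : ∀ x ∈ t, G.Adj c x) (htd : ∀ x ∈ t, G.Adj d x) : False := by
  have nac : a ≠ c := fun h => had (h ▸ hcd)
  have nad : a ≠ d := fun h => hac (G.adj_symm (h ▸ hcd))
  have nbd : b ≠ d := fun h => had (h ▸ hab)
  have hat : a ∉ t := fun h => hac (G.adj_symm (htcc a h))
  have hbt : b ∉ t := fun h => hbd (G.adj_symm (htd b h))
  have hct : c ∉ t := fun h => hac (hta c h)
  have hdt : d ∉ t := fun h => hbd (htb d h)
  have nab : a ≠ b := hab.ne
  have nbc : b ≠ c := hbc.ne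
  have ncd : c ≠ d := hcd.ne
  have nba : b ≠ a := nab.symm
  have ncb : c ≠ b := nbc.symm
  have ndc : d ≠ c := ncd.symm
  have nca : c ≠ a := nac.symm
  have nda : d ≠ a := nad.symm
  have ndb : d ≠ b := nbd.symm
  have hca : ¬ G.Adj c a := fun h => hac h.symm
  have hda : ¬ G.Adj d a := fun h => had h.symm
  have hdb : ¬ G.Adj d b := fun h => hbd h.symm
  set e : t ≃ Fin n := Finset.equivFinOfCardEq htc with he
  apply h2
  have hmem : ∀ k : Fin n, ((e.symm k : t) : V) ∈ t := fun k => (e.symm k).2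
  have hv4 : ∀ x : Fin 4, ![a, b, c, d] x ∉ t := by
    intro x
    fin_cases x
    · exact hat
    · exact hbt
    · exact hct
    · exact hdt
  have hadj4 : ∀ x : Fin 4, ∀ z ∈ t, G.Adj (![a, b, c, d] x) z := by
    intro x
    fin_cases x
    · exact hta
    · exact htb
    · exact htcc
    · exact htd
  refine ⟨⟨⟨Sum.elim ![a, b, c, d] (fun k => ((e.symm k : t) : V)), ?_⟩, ?_⟩⟩
  · rintro (x | x) (y | y) h
    · fin_cases x <;> fin_cases y <;> simp_all
    · exact absurd (by rw [show (![a, b, c, d] x) = ((e.symm y : t) : V) from h]; exact hmem y)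
        (hv4 x)
    · exact absurd (by rw [show (![a, b, c, d] y) = ((e.symm x : t) : V) from h.symm]; exact hmem x)
        (hv4 y)
    · simp only [Sum.elim_inr] at h
      simp [e.symm.injective (Subtype.coe_injective h)]
  · rintro (x | x) (y | y)
    · show G.Adj (![a, b, c, d] x) (![a, b, c, d] y) ↔ (pathGraph 4).Adj x y
      fin_cases x <;> fin_cases y <;>
        simp_all [pathGraph_adj, hab.symm, hbc.symm, hcd.symm, G.irrefl] <;> decide
    · show G.Adj (![a, b, c, d] x) _ ↔ True
      exact iff_of_true (hadj4 x _ (hmem y)) trivial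
    · show G.Adj _ (![a, b, c, d] y) ↔ True
      exact iff_of_true ((hadj4 y _ (hmem x)).symm) trivial
    · show G.Adj _ _ ↔ (⊤ : SimpleGraph (Fin n)).Adj x y
      simp only [Sum.elim_inr, top_adj]
      constructor
      · intro h hxy
        exact h.ne (by rw [hxy])
      · intro hxy
        exact ht (hmem x) (hmem y) (fun h => hxy (e.symm.injective (Subtype.coe_injective h)))

lemma keyCase {n : ℕ} {V : Type} {G : SimpleGraph V}
    (h1 : G.HFree twoK2) (h2 : G.HFree (P4JoinK n))
    (s : Finset V) (hclq : G.IsClique ↑s) (hcard : n + 1 ≤ s.card)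
    (a x y w u : V)
    (hax : ¬ G.Adj a x) (hay : ¬ G.Adj a y) (hxy : G.Adj x y)
    (hau : G.Adj a u) (hux : G.Adj u x) (huy : ¬ G.Adj u y)
    (huw : G.Adj u w)
    (has : ∀ b ∈ s, G.Adj a b) (hxs : ∀ b ∈ s, G.Adj x b) (hys : ∀ b ∈ s, G.Adj y b)
    (hws : ∀ b ∈ s, ¬ G.Adj w b ∧ w ≠ b) : False := by
  classical
  have hbad : (s.filter (fun b => ¬ G.Adj u b)).card ≤ 1 := by
    by_contra hgt
    push_neg at hgt
    obtain ⟨b, hb, b', hb', hbb'⟩ := Finset.one_lt_card.mp hgt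
    simp only [Finset.mem_filter] at hb hb'
    have hadjbb : G.Adj b b' := hclq hb.1 hb'.1 hbb'
    have nub : u ≠ b := fun h => hb'.2 (h.symm ▸ hadjbb)
    have nub' : u ≠ b' := fun h => hb.2 (h.symm ▸ hadjbb.symm)
    exact no2K2 h1 huw hadjbb hb.2 hb'.2 (hws b hb.1).1 (hws b' hb'.1).1
      nub nub' (hws b hb.1).2 (hws b' hb'.1).2
  have hgood : n ≤ (s.filter (fun b => G.Adj u b)).card := by
    have := Finset.card_filter_add_card_filter_not (s := s) (p := fun b => G.Adj u b)
    omega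
  obtain ⟨t, hts, htc⟩ := Finset.exists_subset_card_eq hgood
  have hts' : t ⊆ s := hts.trans (Finset.filter_subset _ s)
  have htclq : G.IsClique ↑t := hclq.subset (by exact_mod_cast hts')
  exact noP4K h2 htclq htc hau hux hxy hax hay huy
    (fun z hz => has z (hts' hz))
    (fun z hz => (Finset.mem_filter.mp (hts hz)).2)
    (fun z hz => hxs z (hts' hz))
    (fun z hz => hys z (hts' hz))

lemma Bset_adj {V : Type} {G : SimpleGraph V} {v : Fin 5 → V} (hv : Function.Injective v)
    {u : V} {i : Fin 5} (hu : u ∈ Bset G v i) (j : Fin 5) :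
    G.Adj u (v j) ↔ (j = i ∨ j = i - 2 ∨ j = i + 2) := by
  have h := hu.2
  constructor
  · intro hadj
    have hm : v j ∈ G.neighborSet u ∩ Set.range v := ⟨hadj, ⟨j, rfl⟩⟩
    rw [h] at hm
    simp only [Set.mem_insert_iff, Set.mem_singleton_iff] at hm
    rcases hm with hm | hm | hm
    · exact Or.inl (hv hm)
    · exact Or.inr (Or.inl (hv hm))
    · exact Or.inr (Or.inr (hv hm))
  · intro hj
    have hm : v j ∈ ({v i, v (i - 2), v (i + 2)} : Set V) := by
      rcases hj with rfl | rfl | rfl <;> simp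
    rw [← h] at hm
    exact hm.1

lemma Dset_adj {V : Type} {G : SimpleGraph V} {v : Fin 5 → V} (hv : Function.Injective v)
    {u : V} {i : Fin 5} (hu : u ∈ Dset G v i) (j : Fin 5) :
    G.Adj u (v j) ↔ j ≠ i := by
  have h := hu.2
  constructor
  · intro hadj
    have hm : v j ∈ G.neighborSet u ∩ Set.range v := ⟨hadj, ⟨j, rfl⟩⟩
    rw [h] at hm
    exact fun hji => hm.2 (by simp [hji])
  · intro hj
    have hm : v j ∈ Set.range v \ {v i} := ⟨⟨j, rfl⟩, fun hh => hj (hv hh)⟩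
    rw [← h] at hm
    exact hm.1

end Aux

/-- In a `(2K₂, P₄ ∨ Kₙ)`-free graph with an induced five-cycle, if `Bᵢ` contains a
clique of size `n + 1`, then `B_{i+2} ∪ B_{i−2} ∪ D_{i+2} ∪ D_{i−2} = ∅`. -/
theorem stmt17 (n : ℕ) (hn : 1 ≤ n) {V : Type} [Fintype V] (G : SimpleGraph V)
    (h1 : G.HFree twoK2) (h2 : G.HFree (P4JoinK n))
    (v : Fin 5 → V) (hv : Function.Injective v)
    (hc5 : ∀ i j : Fin 5, G.Adj (v i) (v j) ↔ j = i + 1 ∨ i = j + 1) :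
    ∀ i : Fin 5,
      (∃ s : Finset V, ↑s ⊆ Bset G v i ∧ G.IsClique ↑s ∧ n + 1 ≤ s.card) →
      Bset G v (i + 2) ∪ Bset G v (i - 2) ∪ Dset G v (i + 2) ∪ Dset G v (i - 2) = ∅ := by
  intro i hex
  obtain ⟨s, hsB, hsclq, hscard⟩ := hex
  rw [Set.eq_empty_iff_forall_notMem]
  intro u hu
  have e2 : i - 2 = i + 3 := by rw [sub_eq_add_neg]; congr 1
  have hcyc : ∀ k l : Fin 5, G.Adj (v (i + k)) (v (i + l)) ↔ (l = k + 1 ∨ k = l + 1) := by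
    intro k l
    rw [hc5]
    simp [add_assoc, add_right_inj]
  have hsadj : ∀ b ∈ s, ∀ k : Fin 5, (G.Adj b (v (i + k)) ↔ (k = 0 ∨ k = 3 ∨ k = 2)) := by
    intro b hb k
    rw [Bset_adj hv (hsB hb) (i + k), e2]
    simp [add_eq_left, add_right_inj]
  have hsrange : ∀ b ∈ s, b ∉ Set.range v := fun b hb => (hsB hb).1
  have has : ∀ b ∈ s, G.Adj (v (i + 0)) b :=
    fun b hb => ((hsadj b hb 0).mpr (by decide)).symm
  have hx2s : ∀ b ∈ s, G.Adj (v (i + 2)) b :=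
    fun b hb => ((hsadj b hb 2).mpr (by decide)).symm
  have hx3s : ∀ b ∈ s, G.Adj (v (i + 3)) b :=
    fun b hb => ((hsadj b hb 3).mpr (by decide)).symm
  have hw1s : ∀ b ∈ s, ¬ G.Adj (v (i + 1)) b ∧ v (i + 1) ≠ b := by
    intro b hb
    exact ⟨fun h => absurd ((hsadj b hb 1).mp h.symm) (by decide),
      fun h => hsrange b hb ⟨i + 1, h⟩⟩
  have hw4s : ∀ b ∈ s, ¬ G.Adj (v (i + 4)) b ∧ v (i + 4) ≠ b := by
    intro b hb
    exact ⟨fun h => absurd ((hsadj b hb 4).mp h.symm) (by decide),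
      fun h => hsrange b hb ⟨i + 4, h⟩⟩
  have c23 : G.Adj (v (i + 2)) (v (i + 3)) := (hcyc 2 3).mpr (by decide)
  have c02 : ¬ G.Adj (v (i + 0)) (v (i + 2)) := fun h => absurd ((hcyc 0 2).mp h) (by decide)
  have c03 : ¬ G.Adj (v (i + 0)) (v (i + 3)) := fun h => absurd ((hcyc 0 3).mp h) (by decide)
  rcases hu with ((hu | hu) | hu) | hu
  · -- u ∈ Bset G v (i+2)
    have huadj : ∀ k : Fin 5, G.Adj u (v (i + k)) ↔ (k = 2 ∨ k = 0 ∨ k = 4) := by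
      intro k
      rw [Bset_adj hv hu (i + k)]
      have e1 : i + 2 - 2 = i + 0 := by rw [add_sub_cancel_right, add_zero]
      have e1' : i + 2 + 2 = i + 4 := by rw [add_assoc]; congr 1
      rw [e1, e1']
      simp [add_right_inj]
    exact keyCase h1 h2 s hsclq hscard (v (i+0)) (v (i+2)) (v (i+3)) (v (i+4)) u
      c02 c03 c23 ((huadj 0).mpr (by decide)).symm ((huadj 2).mpr (by decide))
      (fun h => absurd ((huadj 3).mp h) (by decide)) ((huadj 4).mpr (by decide))
      has hx2s hx3s hw4s
  · -- u ∈ Bset G v (i-2)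
    rw [e2] at hu
    have huadj : ∀ k : Fin 5, G.Adj u (v (i + k)) ↔ (k = 3 ∨ k = 1 ∨ k = 0) := by
      intro k
      rw [Bset_adj hv hu (i + k)]
      have e1 : i + 3 - 2 = i + 1 := by rw [add_sub_assoc]; congr 1
      have e1' : i + 3 + 2 = i + 0 := by rw [add_assoc]; congr 1
      rw [e1, e1']
      simp [add_right_inj]
    exact keyCase h1 h2 s hsclq hscard (v (i+0)) (v (i+3)) (v (i+2)) (v (i+1)) u
      c03 c02 c23.symm ((huadj 0).mpr (by decide)).symm ((huadj 3).mpr (by decide))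
      (fun h => absurd ((huadj 2).mp h) (by decide)) ((huadj 1).mpr (by decide))
      has hx3s hx2s hw1s
  · -- u ∈ Dset G v (i+2)
    have huadj : ∀ k : Fin 5, G.Adj u (v (i + k)) ↔ k ≠ 2 := by
      intro k
      rw [Dset_adj hv hu (i + k)]
      simp [add_right_inj]
    exact keyCase h1 h2 s hsclq hscard (v (i+0)) (v (i+3)) (v (i+2)) (v (i+1)) u
      c03 c02 c23.symm ((huadj 0).mpr (by decide)).symm ((huadj 3).mpr (by decide))
      (fun h => absurd ((huadj 2).mp h) (by decide)) ((huadj 1).mpr (by decide))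
      has hx3s hx2s hw1s
  · -- u ∈ Dset G v (i-2)
    rw [e2] at hu
    have huadj : ∀ k : Fin 5, G.Adj u (v (i + k)) ↔ k ≠ 3 := by
      intro k
      rw [Dset_adj hv hu (i + k)]
      simp [add_right_inj]
    exact keyCase h1 h2 s hsclq hscard (v (i+0)) (v (i+2)) (v (i+3)) (v (i+1)) u
      c02 c03 c23 ((huadj 0).mpr (by decide)).symm ((huadj 2).mpr (by decide))
      (fun h => absurd ((huadj 3).mp h) (by decide)) ((huadj 1).mpr (by decide))
      has hx2s hx3s hw1s
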